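/- Assume b = A x̄ + z, let δ' ∈ (0,1) and γ > (1+δ')/(1−δ'), let s̃ ≥ 1 be an integer with ρ₋(A, s̄+s̃) > 0, let λ₀ > 0, η ∈ (0,1), K ∈ ℕ, set λ_{K+1} = η^{K+1}λ₀, and let λ_tgt ∈ (0, λ_{K+1}] be such that both λ_{K+1} and λ_tgt satisfy μ ≥ max{4, (γ+1)/((1−δ')γ − (1+δ'))} · ‖Aᵀz‖_∞ (for μ = λ_{K+1} and μ = λ_tgt). Suppose x̂ ∈ ℝⁿ satisfies ‖x̂_{S̄ᶜ}‖₀ ≤ s̃ and ω_{λ_{K+1}}(x̂) ≤ δ'λ_{K+1}, and suppose x* is a minimizer of φ_{λ_tgt} with ‖x*_{S̄ᶜ}‖₀ ≤ s̃. Then φ_{λ_tgt}(x̂) − φ_{λ_tgt}(x*) ≤ η^{2(K+1)} · 4.5(1+γ)λ₀² s̄ / ρ₋(A, s̄+s̃), and ‖x̂ − x̄‖₂ ≤ η^{K+1} · 2λ₀√s̄ / ρ₋(A, s̄+s̃). -/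

import Mathlib

/-!
Write `h = x̂ - x̄`, `S̄ = supp x̄` and `λ = η^(K+1) λ₀`. Convexity of `φ_λ` and the residue bound
`ω_λ(x̂) ≤ δ'λ` give `φ_λ(x̂) - φ_λ(x̄) ≤ δ'λ ‖h‖₁ - ‖A h‖² / 2`, while `b = A x̄ + z` bounds the
same difference below by `‖A h‖² / 2 - ‖Aᵀ z‖_∞ ‖h‖₁ + λ (‖h_{S̄ᶜ}‖₁ - ‖h_{S̄}‖₁)`. With the noise
condition this forces the cone condition `‖h_{S̄ᶜ}‖₁ ≤ γ ‖h_{S̄}‖₁` and `‖A h‖² ≤ 2λ ‖h_{S̄}‖₁`.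
As `h` is `(s̄ + s̃)`-sparse, `ρ₋ ‖h‖₂² ≤ ‖A h‖² ≤ 2λ √s̄ ‖h‖₂`, which is the `ℓ₂` bound.
The objective gap is split at `x̄`: the `x̂`-part is controlled by the cone estimate, and the
`x*`-part by `(5/4) λ_tgt √s̄ ‖x* - x̄‖₂ - ρ₋ ‖x* - x̄‖₂² / 2`, a concave quadratic in `‖x* - x̄‖₂`.
-/

open scoped BigOperators
open Matrix

noncomputable section

namespace PGH

/-- Euclidean dot product on `Fin n → ℝ`. -/
def dot {n : ℕ} (x y : Fin n → ℝ) : ℝ := ∑ i, x i * y i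

/-- Squared Euclidean norm. -/
def sqnorm {n : ℕ} (x : Fin n → ℝ) : ℝ := ∑ i, (x i) ^ 2

/-- Euclidean (ℓ₂) norm. -/
noncomputable def l2 {n : ℕ} (x : Fin n → ℝ) : ℝ := Real.sqrt (sqnorm x)

/-- ℓ₁ norm. -/
def l1 {n : ℕ} (x : Fin n → ℝ) : ℝ := ∑ i, |x i|

/-- ℓ∞ norm (maximum absolute coordinate). -/
noncomputable def linf {n : ℕ} (x : Fin n → ℝ) : ℝ := ⨆ i, |x i|

/-- Support of a vector. -/
def supp {n : ℕ} (x : Fin n → ℝ) : Finset (Fin n) := Finset.univ.filter (fun i => x i ≠ 0)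

/-- Number of nonzero coordinates. -/
def l0 {n : ℕ} (x : Fin n → ℝ) : ℕ := (supp x).card

/-- Number of nonzero coordinates within the index set `S`
(i.e. `‖x_S‖₀` for the restriction of `x` to `S`). -/
def l0on {n : ℕ} (S : Finset (Fin n)) (x : Fin n → ℝ) : ℕ :=
  (S.filter (fun i => x i ≠ 0)).card

/-- ℓ₁ norm of the restriction of `x` to the index set `S`. -/
def l1on {n : ℕ} (S : Finset (Fin n)) (x : Fin n → ℝ) : ℝ := ∑ i ∈ S, |x i|

/-- Gradient of `f(x) = (1/2)‖Ax - b‖₂²`, namely `Aᵀ(Ax - b)`. -/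
def grad {m n : ℕ} (A : Matrix (Fin m) (Fin n) ℝ) (b : Fin m → ℝ) (x : Fin n → ℝ) :
    Fin n → ℝ :=
  Aᵀ.mulVec (A.mulVec x - b)

/-- Least-squares objective `f(x) = (1/2)‖Ax - b‖₂²`. -/
def fls {m n : ℕ} (A : Matrix (Fin m) (Fin n) ℝ) (b : Fin m → ℝ) (x : Fin n → ℝ) : ℝ :=
  sqnorm (A.mulVec x - b) / 2

/-- ℓ₁-regularized least-squares objective `φ_λ(x) = f(x) + λ‖x‖₁`. -/
def phi {m n : ℕ} (A : Matrix (Fin m) (Fin n) ℝ) (b : Fin m → ℝ) (lam : ℝ)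
    (x : Fin n → ℝ) : ℝ :=
  fls A b x + lam * l1 x

/-- Restricted maximal eigenvalue `ρ₊(A, s)`. -/
noncomputable def rhoPlus {m n : ℕ} (A : Matrix (Fin m) (Fin n) ℝ) (s : ℕ) : ℝ :=
  sSup {r | ∃ x : Fin n → ℝ, x ≠ 0 ∧ l0 x ≤ s ∧ r = sqnorm (A.mulVec x) / sqnorm x}

/-- Restricted minimal eigenvalue `ρ₋(A, s)`. -/
noncomputable def rhoMinus {m n : ℕ} (A : Matrix (Fin m) (Fin n) ℝ) (s : ℕ) : ℝ :=
  sInf {r | ∃ x : Fin n → ℝ, x ≠ 0 ∧ l0 x ≤ s ∧ r = sqnorm (A.mulVec x) / sqnorm x}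

/-- `ξ` is a subgradient of the ℓ₁ norm at `x`. -/
def IsSubgrad {n : ℕ} (x ξ : Fin n → ℝ) : Prop :=
  ∀ i, (x i ≠ 0 → ξ i = Real.sign (x i)) ∧ (x i = 0 → |ξ i| ≤ 1)

/-- Optimality residue `ω_λ(x) = min_{ξ ∈ ∂‖x‖₁} ‖Aᵀ(Ax−b) + λξ‖_∞`. -/
noncomputable def omega {m n : ℕ} (A : Matrix (Fin m) (Fin n) ℝ) (b : Fin m → ℝ)
    (lam : ℝ) (x : Fin n → ℝ) : ℝ :=
  sInf {r | ∃ ξ : Fin n → ℝ, IsSubgrad x ξ ∧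
    r = linf (fun i => grad A b x i + lam * ξ i)}

/-- The local model `ψ_{λ,L}(y; x)`. -/
def psi {m n : ℕ} (A : Matrix (Fin m) (Fin n) ℝ) (b : Fin m → ℝ) (lam L : ℝ)
    (y x : Fin n → ℝ) : ℝ :=
  fls A b y + dot (grad A b y) (x - y) + L / 2 * sqnorm (x - y) + lam * l1 x

/-- The noise-domination condition
`λ ≥ max{4, (γ+1)/((1−δ')γ−(1+δ'))} ⬝ ‖Aᵀz‖_∞`. -/
def noiseCond {m n : ℕ} (A : Matrix (Fin m) (Fin n) ℝ) (z : Fin m → ℝ)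
    (dp gam lam : ℝ) : Prop :=
  lam ≥ max 4 ((gam + 1) / ((1 - dp) * gam - (1 + dp))) * linf (Aᵀ.mulVec z)

section Vectors

variable {n : ℕ}

lemma sqnorm_nonneg (x : Fin n → ℝ) : 0 ≤ sqnorm x :=
  Finset.sum_nonneg fun _ _ => sq_nonneg _

lemma abs_le_linf (x : Fin n → ℝ) (i : Fin n) : |x i| ≤ linf x :=
  le_ciSup (f := fun j => |x j|) (Set.finite_range _).bddAbove i

lemma linf_nonneg (x : Fin n → ℝ) : 0 ≤ linf x :=
  Real.iSup_nonneg fun _ => abs_nonneg _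

lemma l1on_nonneg (S : Finset (Fin n)) (x : Fin n → ℝ) : 0 ≤ l1on S x :=
  Finset.sum_nonneg fun _ _ => abs_nonneg _

lemma l1_nonneg (x : Fin n → ℝ) : 0 ≤ l1 x :=
  Finset.sum_nonneg fun _ _ => abs_nonneg _

lemma l1_eq_l1on_add_l1on_compl (S : Finset (Fin n)) (x : Fin n → ℝ) :
    l1 x = l1on S x + l1on Sᶜ x :=
  (Finset.sum_add_sum_compl S _).symm

lemma l1_sub_comm (x y : Fin n → ℝ) : l1 (x - y) = l1 (y - x) := by
  simp only [l1, Pi.sub_apply, abs_sub_comm]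

lemma l1_sub_l1_le_l1_sub (x y : Fin n → ℝ) : l1 x - l1 y ≤ l1 (x - y) := by
  rw [l1, l1, l1, ← Finset.sum_sub_distrib]
  exact Finset.sum_le_sum fun i _ => abs_sub_abs_le_abs_sub (x i) (y i)

lemma abs_dot_le_linf_mul_l1 (v x : Fin n → ℝ) : |dot v x| ≤ linf v * l1 x := by
  rw [l1, Finset.mul_sum]
  refine (Finset.abs_sum_le_sum_abs _ _).trans (Finset.sum_le_sum fun i _ => ?_)
  rw [abs_mul]
  exact mul_le_mul_of_nonneg_right (abs_le_linf v i) (abs_nonneg _)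

lemma sqnorm_add (x y : Fin n → ℝ) : sqnorm (x + y) = sqnorm x + 2 * dot x y + sqnorm y := by
  simp only [sqnorm, dot, Pi.add_apply, Finset.mul_sum, ← Finset.sum_add_distrib]
  exact Finset.sum_congr rfl fun _ _ => by ring

lemma sqnorm_neg (x : Fin n → ℝ) : sqnorm (-x) = sqnorm x := by
  simp [sqnorm]

lemma sq_l2 (x : Fin n → ℝ) : l2 x ^ 2 = sqnorm x :=
  Real.sq_sqrt (sqnorm_nonneg x)

lemma l1on_le_sqrt_card_mul_l2 (S : Finset (Fin n)) (x : Fin n → ℝ) :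
    l1on S x ≤ √(S.card : ℝ) * l2 x := by
  rw [l2, ← Real.sqrt_mul (Nat.cast_nonneg _)]
  refine Real.le_sqrt_of_sq_le ?_
  calc l1on S x ^ 2 ≤ S.card * ∑ i ∈ S, |x i| ^ 2 := sq_sum_le_card_mul_sum_sq
    _ ≤ S.card * sqnorm x := by
      simp only [sq_abs]
      exact mul_le_mul_of_nonneg_left
        (Finset.sum_le_sum_of_subset_of_nonneg S.subset_univ fun _ _ _ => sq_nonneg _)
        (Nat.cast_nonneg _)

lemma l0_sub_le {x y : Fin n → ℝ} {s : ℕ} (hy : l0on (supp x)ᶜ y ≤ s) :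
    l0 (y - x) ≤ (supp x).card + s := by
  calc l0 (y - x) ≤ (supp x ∪ (supp x)ᶜ.filter fun i => y i ≠ 0).card := by
        refine Finset.card_le_card fun i => ?_
        by_cases hi : x i = 0 <;> simp [supp, hi]
    _ ≤ (supp x).card + s := (Finset.card_union_le _ _).trans (Nat.add_le_add_left hy _)

lemma l1_sub_l1_le_l1on_sub_l1on_compl (x y : Fin n → ℝ) :
    l1 x - l1 y ≤ l1on (supp x) (y - x) - l1on (supp x)ᶜ (y - x) := by
  have hS : l1on (supp x) x - l1on (supp x) y ≤ l1on (supp x) (y - x) := by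
    rw [l1on, l1on, l1on, ← Finset.sum_sub_distrib]
    exact Finset.sum_le_sum fun i _ => by
      simpa only [Pi.sub_apply, abs_sub_comm] using abs_sub_abs_le_abs_sub (x i) (y i)
  have hzero : ∀ i ∈ (supp x)ᶜ, x i = 0 := by simp [supp]
  have hx : l1on (supp x)ᶜ x = 0 := Finset.sum_eq_zero fun i hi => by simp [hzero i hi]
  have hyx : l1on (supp x)ᶜ (y - x) = l1on (supp x)ᶜ y :=
    Finset.sum_congr rfl fun i hi => by simp [hzero i hi]
  rw [l1_eq_l1on_add_l1on_compl (supp x) x, l1_eq_l1on_add_l1on_compl (supp x) y, hx, hyx]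
  linarith

end Vectors

section Subgradient

variable {n : ℕ}

lemma sign_mul_self_eq_abs (r : ℝ) : Real.sign r * r = |r| := by
  rcases lt_trichotomy r 0 with h | rfl | h
  · simp [Real.sign_of_neg h, abs_of_neg h]
  · simp
  · simp [Real.sign_of_pos h, abs_of_pos h]

lemma abs_sign_le_one (r : ℝ) : |Real.sign r| ≤ 1 := by
  rcases Real.sign_apply_eq r with h | h | h <;> simp [h]

lemma IsSubgrad.mul_self_eq_abs {x ξ : Fin n → ℝ} (hξ : IsSubgrad x ξ) (i : Fin n) :
    ξ i * x i = |x i| := by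
  by_cases hi : x i = 0
  · simp [hi]
  · rw [(hξ i).1 hi, sign_mul_self_eq_abs]

lemma IsSubgrad.abs_le_one {x ξ : Fin n → ℝ} (hξ : IsSubgrad x ξ) (i : Fin n) : |ξ i| ≤ 1 := by
  by_cases hi : x i = 0
  · exact (hξ i).2 hi
  · rw [(hξ i).1 hi]
    exact abs_sign_le_one _

lemma IsSubgrad.l1_add_dot_le {x ξ : Fin n → ℝ} (hξ : IsSubgrad x ξ) (y : Fin n → ℝ) :
    l1 x + dot ξ (y - x) ≤ l1 y := by
  rw [l1, dot, ← Finset.sum_add_distrib]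
  refine Finset.sum_le_sum fun i _ => ?_
  calc |x i| + ξ i * (y - x) i = ξ i * y i := by
        rw [Pi.sub_apply, mul_sub, hξ.mul_self_eq_abs]; ring
    _ ≤ |ξ i| * |y i| := by rw [← abs_mul]; exact le_abs_self _
    _ ≤ |y i| := mul_le_of_le_one_left (abs_nonneg _) (hξ.abs_le_one i)

lemma abs_add_mul_clamp_le {g lam t : ℝ} (hlam : 0 < lam) (ht : |t| ≤ 1) :
    |g + lam * max (-1) (min 1 (-g / lam))| ≤ |g + lam * t| := by
  obtain ⟨ht₁, ht₂⟩ := abs_le.1 ht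
  rcases le_or_gt (-g / lam) (-1) with hlow | hlow
  · have hg : lam ≤ g := by rw [div_le_iff₀ hlam] at hlow; linarith
    rw [max_eq_left ((min_le_right _ _).trans hlow), abs_of_nonneg (by linarith),
      abs_of_nonneg (by nlinarith)]
    nlinarith
  rcases le_or_gt 1 (-g / lam) with hhigh | hhigh
  · have hg : g ≤ -lam := by rw [le_div_iff₀ hlam] at hhigh; linarith
    rw [min_eq_left hhigh, max_eq_right (by norm_num), abs_of_nonpos (by linarith),
      abs_of_nonpos (by nlinarith)]
    nlinarith
  · rw [min_eq_right hhigh.le, max_eq_right hlow.le, mul_div_cancel₀ _ hlam.ne', add_neg_cancel,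
      abs_zero]
    exact abs_nonneg _

end Subgradient

section LeastSquares

variable {m n : ℕ} (A : Matrix (Fin m) (Fin n) ℝ) (b : Fin m → ℝ)

lemma exists_isSubgrad_linf_le_omega {lam : ℝ} (hlam : 0 < lam) (x : Fin n → ℝ) :
    ∃ ξ, IsSubgrad x ξ ∧ linf (fun i => grad A b x i + lam * ξ i) ≤ omega A b lam x := by
  set ξ₀ : Fin n → ℝ := fun i =>
    if x i = 0 then max (-1) (min 1 (-grad A b x i / lam)) else Real.sign (x i)
  have hξ₀ : IsSubgrad x ξ₀ := fun i =>
    ⟨fun hi => if_neg hi, fun hi => by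
      simp only [ξ₀, if_pos hi]
      exact abs_le.2 ⟨le_max_left _ _, max_le (by norm_num) (min_le_left _ _)⟩⟩
  refine ⟨ξ₀, hξ₀, le_csInf ⟨_, ξ₀, hξ₀, rfl⟩ ?_⟩
  rintro r ⟨ξ, hξ, rfl⟩
  refine Real.iSup_le (fun i => le_trans ?_ (abs_le_linf _ i)) (linf_nonneg _)
  by_cases hi : x i = 0
  · simp only [ξ₀, if_pos hi]
    exact abs_add_mul_clamp_le hlam ((hξ i).2 hi)
  · simp only [ξ₀, if_neg hi, (hξ i).1 hi, le_refl]

lemma dot_transpose_mulVec (w : Fin m → ℝ) (x : Fin n → ℝ) :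
    dot (Aᵀ *ᵥ w) x = dot w (A *ᵥ x) := by
  change (Aᵀ *ᵥ w) ⬝ᵥ x = w ⬝ᵥ (A *ᵥ x)
  rw [dotProduct_comm, dotProduct_mulVec, vecMul_transpose, dotProduct_comm]

lemma fls_eq_add_dot_grad (x y : Fin n → ℝ) :
    fls A b y = fls A b x + dot (grad A b x) (y - x) + sqnorm (A *ᵥ (y - x)) / 2 := by
  have hres : A *ᵥ y - b = (A *ᵥ x - b) + A *ᵥ (y - x) := by
    rw [mulVec_sub]; abel
  rw [fls, hres, sqnorm_add, grad, dot_transpose_mulVec, fls]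
  ring

lemma rhoMinus_mul_sqnorm_le {s : ℕ} {x : Fin n → ℝ} (hx : l0 x ≤ s) :
    rhoMinus A s * sqnorm x ≤ sqnorm (A *ᵥ x) := by
  rcases eq_or_ne x 0 with rfl | hx0
  · simp [sqnorm]
  have hpos : 0 < sqnorm x := by
    obtain ⟨i, hi⟩ := Function.ne_iff.1 hx0
    exact Finset.sum_pos' (fun j _ => sq_nonneg (x j))
      ⟨i, Finset.mem_univ i, sq_pos_of_ne_zero hi⟩
  rw [← le_div_iff₀ hpos]
  refine csInf_le ⟨0, ?_⟩ ⟨x, hx0, hx, rfl⟩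
  rintro _ ⟨y, -, -, rfl⟩
  exact div_nonneg (sqnorm_nonneg _) (sqnorm_nonneg _)

end LeastSquares

section Recovery

variable {m n : ℕ} {A : Matrix (Fin m) (Fin n) ℝ} {b : Fin m → ℝ} {xbar : Fin n → ℝ}
  {z : Fin m → ℝ}

lemma phi_sub_phi_le_omega_mul_l1 {lam : ℝ} (hlam : 0 < lam) (x y : Fin n → ℝ) :
    phi A b lam x - phi A b lam y ≤
      omega A b lam x * l1 (x - y) - sqnorm (A *ᵥ (x - y)) / 2 := by
  obtain ⟨ξ, hξ, hω⟩ := exists_isSubgrad_linf_le_omega A b hlam x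
  have hexp := fls_eq_add_dot_grad A b x y
  have hsub := hξ.l1_add_dot_le y
  have hdot : -(omega A b lam x * l1 (x - y)) ≤
      dot (grad A b x) (y - x) + lam * dot ξ (y - x) := by
    have hsplit : dot (fun i => grad A b x i + lam * ξ i) (y - x) =
        dot (grad A b x) (y - x) + lam * dot ξ (y - x) := by
      simp only [dot, Finset.mul_sum, ← Finset.sum_add_distrib]
      exact Finset.sum_congr rfl fun _ _ => by ring
    rw [← hsplit, l1_sub_comm]
    exact neg_le_of_abs_le <| (abs_dot_le_linf_mul_l1 _ _).trans <|
      mul_le_mul_of_nonneg_right hω (l1_nonneg _)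
  have hsym : sqnorm (A *ᵥ (y - x)) = sqnorm (A *ᵥ (x - y)) := by
    rw [← neg_sub, mulVec_neg, sqnorm_neg]
  rw [phi, phi]
  linarith [mul_le_mul_of_nonneg_left hsub hlam.le]

lemma grad_eq_neg_transpose_mulVec (hb : b = A *ᵥ xbar + z) :
    grad A b xbar = -(Aᵀ *ᵥ z) := by
  simp [grad, hb, mulVec_neg]

lemma phi_sub_phi_eq (hb : b = A *ᵥ xbar + z) (μ : ℝ) (x : Fin n → ℝ) :
    phi A b μ x - phi A b μ xbar =
      -dot (Aᵀ *ᵥ z) (x - xbar) + sqnorm (A *ᵥ (x - xbar)) / 2 + μ * (l1 x - l1 xbar) := by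
  have hexp := fls_eq_add_dot_grad A b xbar x
  rw [grad_eq_neg_transpose_mulVec hb,
    show dot (-(Aᵀ *ᵥ z)) (x - xbar) = -dot (Aᵀ *ᵥ z) (x - xbar) from neg_dotProduct _ _] at hexp
  rw [phi, phi, hexp]
  ring

lemma le_phi_sub_phi (hb : b = A *ᵥ xbar + z) {μ : ℝ} (hμ : 0 ≤ μ) (x : Fin n → ℝ) :
    sqnorm (A *ᵥ (x - xbar)) / 2 - linf (Aᵀ *ᵥ z) * l1 (x - xbar) +
        μ * (l1on (supp xbar)ᶜ (x - xbar) - l1on (supp xbar) (x - xbar)) ≤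
      phi A b μ x - phi A b μ xbar := by
  rw [phi_sub_phi_eq hb]
  have hnoise := (abs_le.1 (abs_dot_le_linf_mul_l1 (Aᵀ *ᵥ z) (x - xbar))).2
  have hl1 := mul_le_mul_of_nonneg_left (l1_sub_l1_le_l1on_sub_l1on_compl xbar x) hμ
  linarith

lemma phi_sub_phi_le (hb : b = A *ᵥ xbar + z) {μ : ℝ} (hμ : 0 ≤ μ) (x : Fin n → ℝ) :
    phi A b μ x - phi A b μ xbar ≤
      sqnorm (A *ᵥ (x - xbar)) / 2 + (linf (Aᵀ *ᵥ z) + μ) * l1 (x - xbar) := by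
  rw [phi_sub_phi_eq hb]
  have hnoise := (abs_le.1 (abs_dot_le_linf_mul_l1 (Aᵀ *ᵥ z) (x - xbar))).1
  have hl1 := mul_le_mul_of_nonneg_left (l1_sub_l1_le_l1_sub x xbar) hμ
  linarith

lemma noiseCond.four_mul_le {dp gam lam : ℝ} (h : noiseCond A z dp gam lam) :
    4 * linf (Aᵀ *ᵥ z) ≤ lam :=
  (mul_le_mul_of_nonneg_right (le_max_left _ _) (linf_nonneg _)).trans h

lemma noiseCond.add_one_mul_le {dp gam lam : ℝ} (h : noiseCond A z dp gam lam)
    (hD : 0 < (1 - dp) * gam - (1 + dp)) :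
    (gam + 1) * linf (Aᵀ *ᵥ z) ≤ lam * ((1 - dp) * gam - (1 + dp)) := by
  have := (mul_le_mul_of_nonneg_right (le_max_right _ _) (linf_nonneg _)).trans h
  rwa [div_mul_eq_mul_div, div_le_iff₀ hD] at this

lemma add_one_pos_and_sub_pos_of_div_lt {dp gam : ℝ} (hdp1 : dp < 1)
    (hgam : (1 + dp) / (1 - dp) < gam) : 0 < gam + 1 ∧ 0 < (1 - dp) * gam - (1 + dp) := by
  rw [div_lt_iff₀ (sub_pos.2 hdp1)] at hgam
  constructor <;> nlinarith

lemma l1on_compl_le_and_sqnorm_le (hb : b = A *ᵥ xbar + z) {dp gam lam : ℝ} (hdp1 : dp < 1)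
    (hgam : (1 + dp) / (1 - dp) < gam) (hlam : 0 < lam) (hnoise : noiseCond A z dp gam lam)
    {x : Fin n → ℝ} (hω : omega A b lam x ≤ dp * lam) :
    l1on (supp xbar)ᶜ (x - xbar) ≤ gam * l1on (supp xbar) (x - xbar) ∧
      sqnorm (A *ᵥ (x - xbar)) ≤ 2 * lam * l1on (supp xbar) (x - xbar) := by
  set a := l1on (supp xbar) (x - xbar)
  set c := l1on (supp xbar)ᶜ (x - xbar)
  set ν := linf (Aᵀ *ᵥ z)
  obtain ⟨hgam1, hD⟩ := add_one_pos_and_sub_pos_of_div_lt hdp1 hgam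
  have ha : 0 ≤ a := l1on_nonneg _ _
  have hc : 0 ≤ c := l1on_nonneg _ _
  have hAh := sqnorm_nonneg (A *ᵥ (x - xbar))
  have hl1 : l1 (x - xbar) = a + c := l1_eq_l1on_add_l1on_compl _ _
  have hquad :
      sqnorm (A *ᵥ (x - xbar)) ≤ (dp * lam + ν + lam) * a + (dp * lam + ν - lam) * c := by
    have hupper := phi_sub_phi_le_omega_mul_l1 (A := A) (b := b) hlam x xbar
    have hlower := le_phi_sub_phi hb hlam.le x
    have hres := mul_le_mul_of_nonneg_right hω (l1_nonneg (x - xbar))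
    rw [hl1] at hupper hlower hres
    linarith
  have hν := hnoise.add_one_mul_le hD
  have hmain : (gam + 1) * sqnorm (A *ᵥ (x - xbar)) ≤ 2 * lam * (gam * a - c) := by
    have hcoef_a : (gam + 1) * (dp * lam + ν + lam) ≤ 2 * lam * gam := by linarith
    have hcoef_c : (gam + 1) * (dp * lam + ν - lam) ≤ -(2 * lam) := by linarith
    nlinarith [mul_le_mul_of_nonneg_left hquad hgam1.le,
      mul_le_mul_of_nonneg_right hcoef_a ha, mul_le_mul_of_nonneg_right hcoef_c hc]
  constructor
  · nlinarith [mul_nonneg hgam1.le hAh]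
  · nlinarith [mul_nonneg hlam.le hc]

lemma l2_sub_le_of_omega_le (hb : b = A *ᵥ xbar + z) {dp gam lam : ℝ} (hdp1 : dp < 1)
    (hgam : (1 + dp) / (1 - dp) < gam) (hlam : 0 < lam) (hnoise : noiseCond A z dp gam lam)
    {st : ℕ} (hρ : 0 < rhoMinus A ((supp xbar).card + st)) {x : Fin n → ℝ}
    (hx : l0on (supp xbar)ᶜ x ≤ st) (hω : omega A b lam x ≤ dp * lam) :
    l2 (x - xbar) ≤
      2 * lam * √((supp xbar).card : ℝ) / rhoMinus A ((supp xbar).card + st) := by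
  have hAh := (l1on_compl_le_and_sqnorm_le hb hdp1 hgam hlam hnoise hω).2
  have hρh := rhoMinus_mul_sqnorm_le A (l0_sub_le hx)
  have hSh := l1on_le_sqrt_card_mul_l2 (supp xbar) (x - xbar)
  rw [← sq_l2] at hρh
  rw [le_div_iff₀ hρ]
  have hl2 : 0 ≤ l2 (x - xbar) := Real.sqrt_nonneg _
  rcases hl2.eq_or_lt with h0 | hpos
  · rw [← h0, zero_mul]
    positivity
  · refine le_of_mul_le_mul_right ?_ hpos
    nlinarith [mul_le_mul_of_nonneg_left hSh (by positivity : (0 : ℝ) ≤ 2 * lam)]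

lemma phi_sub_phi_le_of_omega_le (hb : b = A *ᵥ xbar + z) {dp gam lam μ : ℝ} (hdp1 : dp < 1)
    (hgam : (1 + dp) / (1 - dp) < gam) (hlam : 0 < lam) (hnoise : noiseCond A z dp gam lam)
    (hμ₀ : 0 ≤ μ) (hμ : μ ≤ lam) {st : ℕ} (hρ : 0 < rhoMinus A ((supp xbar).card + st))
    {x : Fin n → ℝ} (hx : l0on (supp xbar)ᶜ x ≤ st) (hω : omega A b lam x ≤ dp * lam) :
    phi A b μ x - phi A b μ xbar ≤
      (9 / 2 + 5 / 2 * gam) * lam ^ 2 * (supp xbar).card / rhoMinus A ((supp xbar).card + st) := by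
  set ρ := rhoMinus A ((supp xbar).card + st)
  set s : ℝ := ((supp xbar).card : ℝ)
  set a := l1on (supp xbar) (x - xbar)
  set c := l1on (supp xbar)ᶜ (x - xbar)
  obtain ⟨hcone, hAh⟩ := l1on_compl_le_and_sqnorm_le hb hdp1 hgam hlam hnoise hω
  have hgam1 := (add_one_pos_and_sub_pos_of_div_lt hdp1 hgam).1
  have ha : a ≤ 2 * lam * s / ρ := calc
    a ≤ √s * l2 (x - xbar) := l1on_le_sqrt_card_mul_l2 _ _
    _ ≤ √s * (2 * lam * √s / ρ) := mul_le_mul_of_nonneg_left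
      (l2_sub_le_of_omega_le hb hdp1 hgam hlam hnoise hρ hx hω) (Real.sqrt_nonneg _)
    _ = 2 * lam * (√s * √s) / ρ := by ring
    _ = 2 * lam * s / ρ := by rw [Real.mul_self_sqrt (Nat.cast_nonneg _)]
  have hupper := phi_sub_phi_le hb hμ₀ x
  rw [l1_eq_l1on_add_l1on_compl (supp xbar)] at hupper
  have hnoise_μ : linf (Aᵀ *ᵥ z) + μ ≤ 5 / 4 * lam := by linarith [hnoise.four_mul_le]
  have hnoise_l1 : (linf (Aᵀ *ᵥ z) + μ) * (a + c) ≤ 5 / 4 * lam * ((1 + gam) * a) :=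
    mul_le_mul hnoise_μ (by linarith) (add_nonneg (l1on_nonneg _ _) (l1on_nonneg _ _))
      (by linarith)
  have hscale := mul_le_mul_of_nonneg_left ha (by nlinarith : 0 ≤ lam * (9 / 4 + 5 / 4 * gam))
  have hrhs : lam * (9 / 4 + 5 / 4 * gam) * (2 * lam * s / ρ) =
      (9 / 2 + 5 / 2 * gam) * lam ^ 2 * s / ρ := by ring
  linarith

lemma phi_sub_phi_le_of_l0on_le (hb : b = A *ᵥ xbar + z) {μ : ℝ}
    (hμ : 4 * linf (Aᵀ *ᵥ z) ≤ μ) {st : ℕ} (hρ : 0 < rhoMinus A ((supp xbar).card + st))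
    {y : Fin n → ℝ} (hy : l0on (supp xbar)ᶜ y ≤ st) :
    phi A b μ xbar - phi A b μ y ≤
      25 / 32 * μ ^ 2 * (supp xbar).card / rhoMinus A ((supp xbar).card + st) := by
  set ρ := rhoMinus A ((supp xbar).card + st)
  set R := √((supp xbar).card : ℝ)
  set D := l2 (y - xbar)
  have hν := linf_nonneg (Aᵀ *ᵥ z)
  have hlower := le_phi_sub_phi hb (μ := μ) (by linarith) y
  rw [l1_eq_l1on_add_l1on_compl (supp xbar)] at hlower
  have hρD : ρ * D ^ 2 ≤ sqnorm (A *ᵥ (y - xbar)) :=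
    sq_l2 (y - xbar) ▸ rhoMinus_mul_sqnorm_le A (l0_sub_le hy)
  have haD := mul_le_mul_of_nonneg_left (l1on_le_sqrt_card_mul_l2 (supp xbar) (y - xbar))
    (by linarith : 0 ≤ 5 / 4 * μ)
  have hquad : phi A b μ xbar - phi A b μ y ≤ 5 / 4 * μ * (R * D) - ρ * D ^ 2 / 2 := by
    nlinarith [mul_le_mul_of_nonneg_right (by linarith : linf (Aᵀ *ᵥ z) ≤ μ / 4)
      (l1on_nonneg (supp xbar) (y - xbar)),
      mul_le_mul_of_nonneg_right (by linarith : linf (Aᵀ *ᵥ z) ≤ μ)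
      (l1on_nonneg (supp xbar)ᶜ (y - xbar))]
  -- maximise the concave quadratic in `D`
  rw [← Real.sq_sqrt (Nat.cast_nonneg (supp xbar).card), le_div_iff₀ hρ]
  nlinarith [sq_nonneg (5 / 4 * μ * R - ρ * D)]

end Recovery

theorem stmt11_general {m n : ℕ} (A : Matrix (Fin m) (Fin n) ℝ) (b : Fin m → ℝ)
    (xbar : Fin n → ℝ) (z : Fin m → ℝ) (hb : b = A.mulVec xbar + z)
    (dp gam : ℝ) (hdp0 : 0 < dp) (hdp1 : dp < 1)
    (hgam : gam > (1 + dp) / (1 - dp))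
    (st : ℕ)
    (hrho : 0 < rhoMinus A ((supp xbar).card + st))
    (lam0 : ℝ) (eta : ℝ)
    (K : ℕ) (lamtgt : ℝ) (hlt : 0 < lamtgt) (hle : lamtgt ≤ eta ^ (K + 1) * lam0)
    (hnoise1 : noiseCond A z dp gam (eta ^ (K + 1) * lam0))
    (hnoise2 : noiseCond A z dp gam lamtgt)
    (xhat : Fin n → ℝ) (hsp : l0on (supp xbar)ᶜ xhat ≤ st)
    (homega : omega A b (eta ^ (K + 1) * lam0) xhat ≤ dp * (eta ^ (K + 1) * lam0))
    (xstar : Fin n → ℝ)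
    (hspstar : l0on (supp xbar)ᶜ xstar ≤ st) :
    phi A b lamtgt xhat - phi A b lamtgt xstar ≤
      eta ^ (2 * (K + 1)) * (4.5 * (1 + gam) * lam0 ^ 2 * ((supp xbar).card : ℝ)) /
        rhoMinus A ((supp xbar).card + st) ∧
    l2 (xhat - xbar) ≤
      eta ^ (K + 1) * (2 * lam0 * Real.sqrt ((supp xbar).card : ℝ)) /
        rhoMinus A ((supp xbar).card + st) := by
  rw [show eta ^ (2 * (K + 1)) * (4.5 * (1 + gam) * lam0 ^ 2 * ((supp xbar).card : ℝ)) =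
      4.5 * (1 + gam) * (eta ^ (K + 1) * lam0) ^ 2 * (supp xbar).card by ring,
    show eta ^ (K + 1) * (2 * lam0 * √((supp xbar).card : ℝ)) =
      2 * (eta ^ (K + 1) * lam0) * √((supp xbar).card : ℝ) by ring]
  generalize eta ^ (K + 1) * lam0 = lam at *
  have hlam : 0 < lam := hlt.trans_le hle
  refine ⟨?_, l2_sub_le_of_omega_le hb hdp1 hgam hlam hnoise1 hrho hsp homega⟩
  have hxhat := phi_sub_phi_le_of_omega_le hb hdp1 hgam hlam hnoise1 hlt.le hle hrho hsp homega
  have hxstar := phi_sub_phi_le_of_l0on_le hb hnoise2.four_mul_le hrho hspstar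
  set s : ℝ := ((supp xbar).card : ℝ)
  set ρ := rhoMinus A ((supp xbar).card + st)
  have hlamt : 25 / 32 * lamtgt ^ 2 * s / ρ ≤ 25 / 32 * lam ^ 2 * s / ρ := by gcongr
  have hgam1 : 1 < gam := ((one_lt_div (sub_pos.2 hdp1)).2 (by linarith)).trans hgam
  have hsum : (9 / 2 + 5 / 2 * gam) * lam ^ 2 * s / ρ + 25 / 32 * lam ^ 2 * s / ρ ≤
      4.5 * (1 + gam) * lam ^ 2 * s / ρ := by
    rw [← add_div]
    gcongr
    nlinarith [mul_nonneg (by linarith : (0 : ℝ) ≤ 2 * gam - 25 / 32)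
      (by positivity : (0 : ℝ) ≤ lam ^ 2 * s)]
  linarith

theorem stmt11 {m n : ℕ} (A : Matrix (Fin m) (Fin n) ℝ) (b : Fin m → ℝ)
    (xbar : Fin n → ℝ) (z : Fin m → ℝ) (hb : b = A.mulVec xbar + z)
    (dp gam : ℝ) (hdp0 : 0 < dp) (hdp1 : dp < 1)
    (hgam : gam > (1 + dp) / (1 - dp))
    (st : ℕ) (hst : 1 ≤ st)
    (hrho : 0 < rhoMinus A ((supp xbar).card + st))
    (lam0 : ℝ) (hlam0 : 0 < lam0) (eta : ℝ) (heta0 : 0 < eta) (heta1 : eta < 1)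
    (K : ℕ) (lamtgt : ℝ) (hlt : 0 < lamtgt) (hle : lamtgt ≤ eta ^ (K + 1) * lam0)
    (hnoise1 : noiseCond A z dp gam (eta ^ (K + 1) * lam0))
    (hnoise2 : noiseCond A z dp gam lamtgt)
    (xhat : Fin n → ℝ) (hsp : l0on (supp xbar)ᶜ xhat ≤ st)
    (homega : omega A b (eta ^ (K + 1) * lam0) xhat ≤ dp * (eta ^ (K + 1) * lam0))
    (xstar : Fin n → ℝ) (hmin : ∀ u, phi A b lamtgt xstar ≤ phi A b lamtgt u)
    (hspstar : l0on (supp xbar)ᶜ xstar ≤ st) :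
    phi A b lamtgt xhat - phi A b lamtgt xstar ≤
      eta ^ (2 * (K + 1)) * (4.5 * (1 + gam) * lam0 ^ 2 * ((supp xbar).card : ℝ)) /
        rhoMinus A ((supp xbar).card + st) ∧
    l2 (xhat - xbar) ≤
      eta ^ (K + 1) * (2 * lam0 * Real.sqrt ((supp xbar).card : ℝ)) /
        rhoMinus A ((supp xbar).card + st) :=
  stmt11_general A b xbar z hb dp gam hdp0 hdp1 hgam st hrho lam0 eta K lamtgt hlt hle hnoise1
    hnoise2 xhat hsp homega xstar hspstar

end PGH
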